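/- Let α > 0, ε > 0 and 0 < s₁ < s₂ < d, and let h_ε^{-1} : ℝ → ℝ be the inverse of h_ε(γ) = γ·exp((γ² − α²)/(2ε)). For i = 1, 2, let C_i ∈ (s_i²/2, d²/2) satisfy ∫_{s_i}^d h_ε^{-1}(C_i − t²/2) dt = 0, and define u_i(y) = ∫_{s_i}^y h_ε^{-1}(C_i − t²/2) dt on [s_i, d]. Then ∫_{s₁}^d u₁(y) dy > ∫_{s₂}^d u₂(y) dy; that is, the total mass Π(s) = ∫_s^d u_s(y) dy of the solution with support [s, d] is strictly decreasing in s. Consequently, if Π(c) > 1 > Π(s) for some s, then there is at most one s* ∈ [c, d) with ∫_{s*}^d u_{s*}(y) dy = 1. -/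

import Mathlib

/-!
Write `G_C(t) = h⁻¹(C - t²/2)`; since `h⁻¹` is an increasing bijection fixing `0`, `G_C(t)` has the
sign of `√(2C) - t` for `t ≥ 0` and is increasing in `C`. Integrating by parts, the mass of
`u_i` is `∫_{s_i}^d (d - t) G_{C_i}`, and because `∫_{s_i}^d G_{C_i} = 0` the weight `d - t` may be
replaced by `τ - t` for any constant `τ`. The constraints force `C₁ < C₂`, so `G_{C₁} < G_{C₂}`.
With `τ = min (√(2C₁)) s₂` the difference of the masses is
`∫_{s₁}^{s₂} (τ - t) G_{C₁} + ∫_{s₂}^d (τ - t) (G_{C₁} - G_{C₂})`,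
where the first integrand is nonnegative and the second positive.
-/

open MeasureTheory Set

theorem strictMono_mul_exp_sq_sub_div (α : ℝ) {ε : ℝ} (hε : 0 < ε) :
    StrictMono fun γ : ℝ => γ * Real.exp ((γ ^ 2 - α ^ 2) / (2 * ε)) := by
  refine strictMono_of_deriv_pos fun γ => ?_
  have hderiv : HasDerivAt (fun γ : ℝ => γ * Real.exp ((γ ^ 2 - α ^ 2) / (2 * ε)))
      (Real.exp ((γ ^ 2 - α ^ 2) / (2 * ε)) * (1 + γ ^ 2 / ε)) γ := by
    have hexp := (((hasDerivAt_pow 2 γ).sub_const (α ^ 2)).div_const (2 * ε)).exp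
    refine ((hasDerivAt_id' γ).fun_mul hexp).congr_deriv ?_
    norm_num
    field_simp
  rw [hderiv.deriv]
  positivity

theorem integral_integral_eq_integral_sub_mul {G : ℝ → ℝ} (hG : Continuous G) (s d : ℝ) :
    (∫ y in s..d, ∫ t in s..y, G t) = ∫ t in s..d, (d - t) * G t := by
  have hparts := intervalIntegral.integral_mul_deriv_eq_deriv_mul (a := s) (b := d)
    (u := fun y => ∫ t in s..y, G t) (v := fun y => y - d) (u' := G) (v' := fun _ => 1)
    (fun x _ => hG.integral_hasStrictDerivAt s x |>.hasDerivAt)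
    (fun x _ => (hasDerivAt_id x).sub_const d)
    (hG.intervalIntegrable _ _) (continuous_const.intervalIntegrable _ _)
  simp only [intervalIntegral.integral_same, mul_one, sub_self, mul_zero, zero_mul,
    zero_sub] at hparts
  rw [hparts, ← intervalIntegral.integral_neg]
  exact intervalIntegral.integral_congr fun x _ => by ring

theorem integral_sub_mul_eq_of_integral_eq_zero {G : ℝ → ℝ} {a b : ℝ}
    (hG : IntervalIntegrable G volume a b) (h : ∫ t in a..b, G t = 0) (c c' : ℝ) :
    (∫ t in a..b, (c - t) * G t) = ∫ t in a..b, (c' - t) * G t := by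
  have hdiff : (∫ t in a..b, (c - t) * G t) - ∫ t in a..b, (c' - t) * G t
      = (c - c') * ∫ t in a..b, G t := by
    rw [← intervalIntegral.integral_sub, ← intervalIntegral.integral_const_mul]
    · exact intervalIntegral.integral_congr fun t _ => by ring
    all_goals exact hG.continuousOn_mul (by fun_prop)
  rw [h, mul_zero] at hdiff
  linarith

section Profile

variable {f : ℝ → ℝ}

theorem min_sqrt_sub_mul_nonneg (hf : Monotone f) (hf0 : f 0 = 0) {C b t : ℝ}
    (ht₀ : 0 < t) (htb : t ≤ b) :
    0 ≤ (min (Real.sqrt (2 * C)) b - t) * f (C - t ^ 2 / 2) := by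
  rcases le_or_gt t (min (Real.sqrt (2 * C)) b) with hτ | hτ
  · have hsq : t ^ 2 ≤ 2 * C := (Real.le_sqrt' ht₀).1 (hτ.trans (min_le_left _ _))
    have hf_nonneg : 0 ≤ f (C - t ^ 2 / 2) := hf0 ▸ hf (by linarith)
    exact mul_nonneg (by linarith) hf_nonneg
  · have hsqrt : Real.sqrt (2 * C) < t := (min_lt_iff.1 hτ).resolve_right htb.not_gt
    have hsq : 2 * C < t ^ 2 := (Real.sqrt_lt' ht₀).1 hsqrt
    have hf_nonpos : f (C - t ^ 2 / 2) ≤ 0 := hf0 ▸ hf (by linarith)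
    exact mul_nonneg_of_nonpos_of_nonpos (by linarith) hf_nonpos

theorem lt_of_integral_comp_sub_sq_eq_zero (hf : StrictMono f) (hfc : Continuous f)
    (hf0 : f 0 = 0) {s₁ s₂ d C₁ C₂ : ℝ} (hs₁ : 0 ≤ s₁) (hs₁s₂ : s₁ < s₂) (hs₂d : s₂ ≤ d)
    (hC₂ : s₂ ^ 2 / 2 < C₂) (h₁ : ∫ t in s₁..d, f (C₁ - t ^ 2 / 2) = 0)
    (h₂ : ∫ t in s₂..d, f (C₂ - t ^ 2 / 2) = 0) : C₁ < C₂ := by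
  by_contra! hle
  have hhead : 0 < ∫ t in s₁..s₂, f (C₁ - t ^ 2 / 2) := by
    refine intervalIntegral.intervalIntegral_pos_of_pos_on
      (Continuous.intervalIntegrable (by fun_prop) _ _) (fun t ht => ?_) hs₁s₂
    have ht₂ : t ^ 2 < s₂ ^ 2 := pow_lt_pow_left₀ ht.2 (hs₁.trans ht.1.le) two_ne_zero
    exact hf0 ▸ hf (by linarith)
  have htail : 0 ≤ ∫ t in s₂..d, f (C₁ - t ^ 2 / 2) := h₂ ▸
    intervalIntegral.integral_mono_on hs₂d (Continuous.intervalIntegrable (by fun_prop) _ _)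
      (Continuous.intervalIntegrable (by fun_prop) _ _) fun t _ => hf.monotone (by linarith)
  rw [← intervalIntegral.integral_add_adjacent_intervals (b := s₂)
    (Continuous.intervalIntegrable (by fun_prop) _ _)
    (Continuous.intervalIntegrable (by fun_prop) _ _)] at h₁
  linarith

theorem integral_sub_mul_lt_integral_sub_mul (hf : StrictMono f) (hfc : Continuous f)
    (hf0 : f 0 = 0) {s₁ s₂ d C₁ C₂ : ℝ} (hs₁ : 0 < s₁) (hs₁s₂ : s₁ < s₂) (hs₂d : s₂ < d)
    (hC₂ : s₂ ^ 2 / 2 < C₂) (h₁ : ∫ t in s₁..d, f (C₁ - t ^ 2 / 2) = 0)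
    (h₂ : ∫ t in s₂..d, f (C₂ - t ^ 2 / 2) = 0) :
    ∫ t in s₂..d, (d - t) * f (C₂ - t ^ 2 / 2) < ∫ t in s₁..d, (d - t) * f (C₁ - t ^ 2 / 2) := by
  have hC : C₁ < C₂ :=
    lt_of_integral_comp_sub_sq_eq_zero hf hfc hf0 hs₁.le hs₁s₂ hs₂d.le hC₂ h₁ h₂
  set τ := min (Real.sqrt (2 * C₁)) s₂
  have hτ : τ ≤ s₂ := min_le_right _ _
  have hhead : 0 ≤ ∫ t in s₁..s₂, (τ - t) * f (C₁ - t ^ 2 / 2) :=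
    intervalIntegral.integral_nonneg hs₁s₂.le fun t ht =>
      min_sqrt_sub_mul_nonneg hf.monotone hf0 (hs₁.trans_le ht.1) ht.2
  have htail : ∫ t in s₂..d, (τ - t) * f (C₂ - t ^ 2 / 2)
      < ∫ t in s₂..d, (τ - t) * f (C₁ - t ^ 2 / 2) :=
    intervalIntegral.integral_lt_integral_of_continuousOn_of_le_of_exists_lt hs₂d
      (by fun_prop) (by fun_prop)
      (fun t ht => mul_le_mul_of_nonpos_left (hf.monotone (by linarith)) (by linarith [ht.1]))
      ⟨d, right_mem_Icc.2 hs₂d.le, mul_lt_mul_of_neg_left (hf (by linarith)) (by linarith)⟩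
  rw [integral_sub_mul_eq_of_integral_eq_zero
      (Continuous.intervalIntegrable (by fun_prop) _ _) h₁ d τ,
    integral_sub_mul_eq_of_integral_eq_zero
      (Continuous.intervalIntegrable (by fun_prop) _ _) h₂ d τ,
    ← intervalIntegral.integral_add_adjacent_intervals (a := s₁) (b := s₂)
      (Continuous.intervalIntegrable (by fun_prop) _ _)
      (Continuous.intervalIntegrable (by fun_prop) _ _)]
  linarith

end Profile

theorem stmt_19_general (α ε s₁ s₂ d C₁ C₂ : ℝ) (hε : 0 < ε)
    (hs₁ : 0 < s₁) (hs₁s₂ : s₁ < s₂) (hs₂d : s₂ < d)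
    (h hinv : ℝ → ℝ)
    (hh : ∀ γ : ℝ, h γ = γ * Real.exp ((γ ^ 2 - α ^ 2) / (2 * ε)))
    (hinv_left : Function.LeftInverse hinv h)
    (hinv_right : Function.RightInverse hinv h)
    (hC₁ : (∫ t in s₁..d, hinv (C₁ - t ^ 2 / 2)) = 0)
    (hC₂mem : C₂ ∈ Set.Ioo (s₂ ^ 2 / 2) (d ^ 2 / 2))
    (hC₂ : (∫ t in s₂..d, hinv (C₂ - t ^ 2 / 2)) = 0)
    (u₁ u₂ : ℝ → ℝ)
    (hu₁ : ∀ y : ℝ, u₁ y = ∫ t in s₁..y, hinv (C₁ - t ^ 2 / 2))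
    (hu₂ : ∀ y : ℝ, u₂ y = ∫ t in s₂..y, hinv (C₂ - t ^ 2 / 2)) :
    (∫ y in s₂..d, u₂ y) < (∫ y in s₁..d, u₁ y) ∧
    ¬((∫ y in s₁..d, u₁ y) = 1 ∧ (∫ y in s₂..d, u₂ y) = 1) := by
  have hmono : StrictMono h := by
    rw [show h = _ from funext hh]
    exact strictMono_mul_exp_sq_sub_div α hε
  let e : ℝ ≃o ℝ := hmono.orderIsoOfRightInverse h hinv hinv_right
  have hf : StrictMono hinv := e.symm.strictMono
  have hfc : Continuous hinv := e.symm.continuous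
  have hf0 : hinv 0 = 0 := by simpa [hh] using hinv_left 0
  have hmass : (∫ y in s₂..d, u₂ y) < ∫ y in s₁..d, u₁ y := by
    rw [show u₁ = _ from funext hu₁, show u₂ = _ from funext hu₂,
      integral_integral_eq_integral_sub_mul (by fun_prop),
      integral_integral_eq_integral_sub_mul (by fun_prop)]
    exact integral_sub_mul_lt_integral_sub_mul hf hfc hf0 hs₁ hs₁s₂ hs₂d hC₂mem.1 hC₁ hC₂
  exact ⟨hmass, fun ⟨h₁, h₂⟩ => hmass.ne (h₂.trans h₁.symm)⟩

theorem stmt_19 (α ε s₁ s₂ d C₁ C₂ : ℝ) (hα : 0 < α) (hε : 0 < ε)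
    (hs₁ : 0 < s₁) (hs₁s₂ : s₁ < s₂) (hs₂d : s₂ < d)
    (h hinv : ℝ → ℝ)
    (hh : ∀ γ : ℝ, h γ = γ * Real.exp ((γ ^ 2 - α ^ 2) / (2 * ε)))
    (hinv_left : Function.LeftInverse hinv h)
    (hinv_right : Function.RightInverse hinv h)
    (hC₁mem : C₁ ∈ Set.Ioo (s₁ ^ 2 / 2) (d ^ 2 / 2))
    (hC₁ : (∫ t in s₁..d, hinv (C₁ - t ^ 2 / 2)) = 0)
    (hC₂mem : C₂ ∈ Set.Ioo (s₂ ^ 2 / 2) (d ^ 2 / 2))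
    (hC₂ : (∫ t in s₂..d, hinv (C₂ - t ^ 2 / 2)) = 0)
    (u₁ u₂ : ℝ → ℝ)
    (hu₁ : ∀ y : ℝ, u₁ y = ∫ t in s₁..y, hinv (C₁ - t ^ 2 / 2))
    (hu₂ : ∀ y : ℝ, u₂ y = ∫ t in s₂..y, hinv (C₂ - t ^ 2 / 2)) :
    (∫ y in s₂..d, u₂ y) < (∫ y in s₁..d, u₁ y) ∧
    ¬((∫ y in s₁..d, u₁ y) = 1 ∧ (∫ y in s₂..d, u₂ y) = 1) :=
  stmt_19_general α ε s₁ s₂ d C₁ C₂ hε hs₁ hs₁s₂ hs₂d h hinv hh hinv_left hinv_right hC₁ hC₂mem hC₂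
    u₁ u₂ hu₁ hu₂
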